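/- arXiv:2201.06646 — 3 statements merged into one kernel-verified Lean document; each statement's English description precedes it below -/
import Mathlib

section
/- Let k be a field of characteristic 2 and n ≥ 2. In the ring R = k[x,y,z]/(z^2 + x^2 y + x y^n + x y z) (the D_{2n}^{n-1} singularity), the maps v₁ = y∂/∂y + (x + z + n y^{n-1})∂/∂z and v₂ = x∂/∂x + (z + y^{n-1})∂/∂z are well-defined k-derivations of R. -/
open MvPolynomial

/-!
In characteristic 2 both derivations kill `f` outright: `v₁ f` and `v₂ f` are each twice a
polynomial, so they vanish and lie in `(f)` trivially. The only care needed is the truncated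
exponent `n - 1`: the identity `y · yⁿ⁻¹ = yⁿ` used in `v₂ f` needs `n ≥ 1`.
-/

namespace D2n

variable {k : Type*} [CommRing k] (n : ℕ)

noncomputable abbrev poly : MvPolynomial (Fin 3) k :=
  X 2 ^ 2 + X 0 ^ 2 * X 1 + X 0 * X 1 ^ n + X 0 * X 1 * X 2

lemma pderiv_zero_poly :
    pderiv 0 (poly n : MvPolynomial (Fin 3) k) = 2 * X 0 * X 1 + X 1 ^ n + X 1 * X 2 := by
  simp only [map_add, Derivation.leibniz, Derivation.leibniz_pow, pderiv_X, Pi.single_apply,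
    Fin.reduceEq, if_true, if_false, smul_eq_mul, nsmul_eq_mul]
  ring

lemma pderiv_one_poly :
    pderiv 1 (poly n : MvPolynomial (Fin 3) k) =
      X 0 ^ 2 + (n : MvPolynomial (Fin 3) k) * X 0 * X 1 ^ (n - 1) + X 0 * X 2 := by
  simp only [map_add, Derivation.leibniz, Derivation.leibniz_pow, pderiv_X, Pi.single_apply,
    Fin.reduceEq, if_true, if_false, smul_eq_mul, nsmul_eq_mul]
  ring

lemma pderiv_two_poly :
    pderiv 2 (poly n : MvPolynomial (Fin 3) k) = 2 * X 2 + X 0 * X 1 := by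
  simp [pderiv_X]

variable [CharP k 2]

lemma v₁_poly_eq_zero :
    X 1 * pderiv 1 (poly n) + (X 0 + X 2 + (n : MvPolynomial (Fin 3) k) * X 1 ^ (n - 1)) *
      pderiv 2 (poly n) = 0 := by
  rw [pderiv_one_poly, pderiv_two_poly]
  linear_combination (X 0 ^ 2 * X 1 + X 0 * X 1 * X 2 + n * X 0 * X 1 * X 1 ^ (n - 1) +
    X 0 * X 2 + X 2 ^ 2 + n * X 1 ^ (n - 1) * X 2) *
    CharTwo.two_eq_zero (R := MvPolynomial (Fin 3) k)

lemma v₂_poly_eq_zero (hn : 1 ≤ n) :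
    X 0 * pderiv 0 (poly n) + (X 2 + X 1 ^ (n - 1)) * pderiv 2 (poly n : MvPolynomial (Fin 3) k)
      = 0 := by
  obtain ⟨m, rfl⟩ := Nat.exists_eq_add_of_le' hn
  rw [pderiv_zero_poly, pderiv_two_poly, Nat.add_sub_cancel]
  linear_combination (X 0 ^ 2 * X 1 + X 0 * X 1 * X 2 + X 0 * X 1 ^ (m + 1) + X 2 ^ 2 +
    X 1 ^ m * X 2) *
    CharTwo.two_eq_zero (R := MvPolynomial (Fin 3) k)

end D2n

/-- For the `D_{2n}^{n-1}` singularity `f = z² + x²y + xyⁿ + xyz` in characteristic 2,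
the derivations `v₁ = y ∂/∂y + (x + z + n yⁿ⁻¹) ∂/∂z` and
`v₂ = x ∂/∂x + (z + yⁿ⁻¹) ∂/∂z` send `f` into the ideal `(f)`,
hence descend to `k[x,y,z]/(f)`. -/
theorem D2n_derivations_descend {k : Type*} [Field k] [CharP k 2] (n : ℕ) (hn : 2 ≤ n) :
    ∀ f : MvPolynomial (Fin 3) k,
      f = X 2 ^ 2 + X 0 ^ 2 * X 1 + X 0 * X 1 ^ n + X 0 * X 1 * X 2 →
      (X 1 * pderiv (1 : Fin 3) f
          + (X 0 + X 2 + (n : MvPolynomial (Fin 3) k) * X 1 ^ (n - 1)) * pderiv (2 : Fin 3) f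
        ∈ Ideal.span {f}) ∧
      (X 0 * pderiv (0 : Fin 3) f + (X 2 + X 1 ^ (n - 1)) * pderiv (2 : Fin 3) f
        ∈ Ideal.span {f}) := by
  rintro f rfl
  refine ⟨?_, ?_⟩
  · rw [D2n.v₁_poly_eq_zero]
    exact Ideal.zero_mem _
  · rw [D2n.v₂_poly_eq_zero n (by omega)]
    exact Ideal.zero_mem _
end

section
/- Let k be a field of characteristic 5. For f = z^2 + x^3 + y^5 + x y^4 (the E_8^1 singularity in characteristic 5), f^4 does not lie in the ideal (x^5, y^5, z^5) of k[x,y,z]; hence this singularity is F-pure by Fedder's criterion. -/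
/-!
Modulo `(x⁵, y⁵, z⁵)` the only monomial of `f⁴` that survives is `x⁴y⁴z⁴`, coming from
`z² · z² · x³ · xy⁴` with multinomial coefficient `4!/(2! 1! 1!) = 12`. So `f⁴ ≡ 12 x⁴y⁴z⁴`,
and `12 ≠ 0` in characteristic 5, while a monomial ideal contains no polynomial with a nonzero
coefficient at a monomial outside it.
-/

open MvPolynomial

theorem MvPolynomial.coeff_eq_zero_of_mem_span_X_pow_image {σ R : Type*} [CommSemiring R]
    {n : σ → ℕ} {s : Set σ} {p : MvPolynomial σ R}
    (hp : p ∈ Ideal.span ((fun i => X i ^ n i) '' s)) {m : σ →₀ ℕ} (hm : ∀ i ∈ s, m i < n i) :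
    coeff m p = 0 := by
  have hmonomial : (fun i => (X i ^ n i : MvPolynomial σ R)) '' s =
      (fun d => monomial d 1) '' ((fun i => Finsupp.single i (n i)) '' s) := by
    simp only [Set.image_image, X_pow_eq_monomial]
  rw [hmonomial, mem_ideal_span_monomial_image] at hp
  by_contra hm0
  obtain ⟨_, ⟨i, hi, rfl⟩, hle⟩ := hp m (mem_support_iff.mpr hm0)
  exact (hm i hi).not_ge (by simpa using hle i)

theorem E81_pow_four_eq_of_pow_five_eq_zero {R : Type*} [CommRing R] {x y z : R}
    (hx : x ^ 5 = 0) (hy : y ^ 5 = 0) (hz : z ^ 5 = 0) :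
    (z ^ 2 + x ^ 3 + y ^ 5 + x * y ^ 4) ^ 4 = 12 * (x ^ 4 * y ^ 4 * z ^ 4) := by
  grind

/-- In characteristic 5, the `E₈¹` polynomial `f = z² + x³ + y⁵ + xy⁴` satisfies
`f⁴ ∉ (x⁵, y⁵, z⁵)`, so by Fedder's criterion the singularity is F-pure. -/
theorem E81_char5_Fpure {k : Type*} [Field k] [CharP k 5] :
    (X 2 ^ 2 + X 0 ^ 3 + X 1 ^ 5 + X 0 * X 1 ^ 4 : MvPolynomial (Fin 3) k) ^ 4
      ∉ Ideal.span {(X 0 ^ 5 : MvPolynomial (Fin 3) k), X 1 ^ 5, X 2 ^ 5} := by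
  set I := Ideal.span {(X 0 ^ 5 : MvPolynomial (Fin 3) k), X 1 ^ 5, X 2 ^ 5}
  have hI : I = Ideal.span ((fun i => X i ^ 5) '' {0, 1, 2}) := by
    simp only [I, Set.image_insert_eq, Set.image_singleton]
  have hX : ∀ i, Ideal.Quotient.mk I (X i) ^ 5 = 0 := fun i => by
    rw [← map_pow, Ideal.Quotient.eq_zero_iff_mem, hI]
    exact Ideal.subset_span ⟨i, by fin_cases i <;> simp, rfl⟩
  intro hf
  have hmem : 12 * (X 0 ^ 4 * X 1 ^ 4 * X 2 ^ 4) ∈ I := by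
    have hquot := E81_pow_four_eq_of_pow_five_eq_zero (hX 0) (hX 1) (hX 2)
    simp only [← map_pow, ← map_mul, ← map_add, ← map_ofNat (Ideal.Quotient.mk I)] at hquot
    rwa [← Ideal.Quotient.eq_zero_iff_mem, ← hquot, Ideal.Quotient.eq_zero_iff_mem]
  rw [hI] at hmem
  have hcoeff := coeff_eq_zero_of_mem_span_X_pow_image hmem
    (m := Finsupp.single 0 4 + Finsupp.single 1 4 + Finsupp.single 2 4)
    (by intro i _; fin_cases i <;> simp)
  rw [← map_ofNat C 12, coeff_C_mul] at hcoeff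
  simp only [X_pow_eq_monomial, monomial_mul, coeff_monomial, if_true, mul_one] at hcoeff
  exact (CharP.cast_eq_zero_iff k 5 12).not.mpr (by decide) (by exact_mod_cast hcoeff)
end

section
/- Let k = F_9 with generator a satisfying a^2 = a + 1, and let f = y^2 z - x(x - a z)(x + z) ∈ k[x,y,z]. Then the maps x∂/∂x + y∂/∂y + z∂/∂z (the Euler derivation) and a^5 y ∂/∂x + (x + a^6 z) ∂/∂y are well-defined k-derivations of R = k[x,y,z]/(f). -/
/-!
Both derivations kill `f` outright. For the Euler derivation this is Euler's identity
`∑ xᵢ ∂ᵢf = 3f = 0`. For the second one, in characteristic 3 the `yz²` terms cancel and what is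
left is `(a⁵ - a⁶ - 1)·xyz`; since `a⁴ = -1` (`a` generates `F₉ˣ`, of order 8),
`a⁵ - a⁶ = a⁴(a - a²) = 1`.
-/

open MvPolynomial

section
variable {R : Type*} [CommRing R]

theorem MvPolynomial.IsHomogeneous.sum_X_mul_pderiv_eq_zero {σ : Type*} [Fintype σ]
    {φ : MvPolynomial σ R} {n : ℕ} (h : φ.IsHomogeneous n) (hn : (n : R) = 0) :
    ∑ i, X i * pderiv i φ = 0 := by
  rw [h.sum_X_mul_pderiv, nsmul_eq_mul, ← map_natCast C, hn, map_zero, zero_mul]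

noncomputable def cubicCone (c : R) : MvPolynomial (Fin 3) R :=
  X 1 ^ 2 * X 2 - X 0 * (X 0 - C c * X 2) * (X 0 + X 2)

theorem isHomogeneous_cubicCone (c : R) : (cubicCone c).IsHomogeneous 3 := by
  have hX (i : Fin 3) := isHomogeneous_X R i
  exact ((hX 1).pow 2 |>.mul (hX 2)).sub
    (((hX 0).mul ((hX 0).sub (isHomogeneous_C_mul_X c 2))).mul ((hX 0).add (hX 2)))

theorem pderiv_zero_cubicCone [CharP R 3] (c : R) :
    pderiv 0 (cubicCone c) = C (1 - c) * X 0 * X 2 + C c * X 2 ^ 2 := by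
  have h3 : (3 : MvPolynomial (Fin 3) R) = 0 := CharP.cast_eq_zero _ 3
  simp only [cubicCone, map_sub, map_add, Derivation.leibniz, Derivation.leibniz_pow, pderiv_X,
    derivation_C, Pi.single_apply, Fin.reduceEq, if_true, if_false, smul_eq_mul, C_1]
  linear_combination (-X 0 ^ 2 - X 0 * X 2 + X 0 * X 2 * C c) * h3

theorem pderiv_one_cubicCone (c : R) : pderiv 1 (cubicCone c) = 2 * X 1 * X 2 := by
  simp only [cubicCone, map_sub, map_add, Derivation.leibniz, Derivation.leibniz_pow, pderiv_X,
    derivation_C, Pi.single_apply, Fin.reduceEq, if_true, if_false, smul_eq_mul]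
  ring

theorem C_pow_five_mul_X_one_mul_pderiv_zero_add_mul_pderiv_one_cubicCone [CharP R 3] (c : R) :
    C (c ^ 5) * X 1 * pderiv 0 (cubicCone c) + (X 0 + C (c ^ 6) * X 2) * pderiv 1 (cubicCone c) =
      C (c ^ 5 - c ^ 6 - 1) * (X 0 * X 1 * X 2) := by
  have h3 : (3 : MvPolynomial (Fin 3) R) = 0 := CharP.cast_eq_zero _ 3
  rw [pderiv_zero_cubicCone, pderiv_one_cubicCone]
  simp only [map_sub, map_pow, map_one]
  linear_combination (X 0 * X 1 * X 2 + C c ^ 6 * X 1 * X 2 ^ 2) * h3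

theorem pow_five_sub_pow_six_eq_one [CharP R 3] {a : R} (ha : a ^ 2 = a + 1) :
    a ^ 5 - a ^ 6 = 1 := by
  have h3 : (3 : R) = 0 := CharP.cast_eq_zero _ 3
  linear_combination (-a ^ 4 - a ^ 2 - a - 2) * ha - (a + 1) * h3
end

/-- Over `k = F₉` with generator `a` satisfying `a² = a + 1`, for the cone
`f = y²z - x(x - az)(x + z)`, the Euler derivation `x∂ₓ + y∂ᵧ + z∂_z` and the
derivation `a⁵y ∂ₓ + (x + a⁶z) ∂ᵧ` send `f` into the ideal `(f)`, hence are
well-defined derivations of `R = k[x,y,z]/(f)`. -/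
theorem F9_cone_derivations_descend (a : GaloisField 3 2) (ha : a ^ 2 = a + 1) :
    ∀ f : MvPolynomial (Fin 3) (GaloisField 3 2),
      f = X 1 ^ 2 * X 2 - X 0 * (X 0 - C a * X 2) * (X 0 + X 2) →
      (X 0 * pderiv (0 : Fin 3) f + X 1 * pderiv (1 : Fin 3) f
          + X 2 * pderiv (2 : Fin 3) f ∈ Ideal.span {f}) ∧
      (C (a ^ 5) * X 1 * pderiv (0 : Fin 3) f
          + (X 0 + C (a ^ 6) * X 2) * pderiv (1 : Fin 3) f ∈ Ideal.span {f}) := by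
  intro f hf
  change f = cubicCone a at hf
  subst hf
  constructor
  · have h := (isHomogeneous_cubicCone a).sum_X_mul_pderiv_eq_zero (CharP.cast_eq_zero _ 3)
    rw [Fin.sum_univ_three] at h
    exact h ▸ zero_mem _
  · rw [C_pow_five_mul_X_one_mul_pderiv_zero_add_mul_pderiv_one_cubicCone,
      pow_five_sub_pow_six_eq_one ha, sub_self, map_zero, zero_mul]
    exact zero_mem _
end
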